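/- arXiv:1212.4695 — 6 statements merged into one kernel-verified Lean document; each statement's English description precedes it below -/
import Mathlib

section
/- Let K ⊂ ℝ^D be compact, let C U := ∫_K U and B U := ∮_{∂K} U be the cell integral and boundary integral, assumed to satisfy C(1) > 0 and B(1)/C(1) = 1 (i.e. B̂(1) = 1 where B̂(U) := BU/CU). Suppose U⋆ is continuous on K, nonnegative on K, C U⋆ > 0, and U⋆ maximizes B̂ over all continuous nonnegative functions with positive cell integral in a given admissible class closed under subtraction of constants. If B̂(U⋆) > 1 then min_{x∈K} U⋆(x) = 0, i.e. a non-constant optimizer has a zero in K. -/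
/-!
If an optimizer `U⋆` had no zero on the compact cell, it would be bounded below there by some
`c > 0`, and `U⋆ - c` would still be admissible. Since `B 1 = C 1`, subtracting `c` removes the
same amount `c · C 1` from numerator and denominator of `B U⋆ / C U⋆ > 1`, which strictly
increases the ratio and contradicts maximality.
-/

theorem div_lt_sub_div_sub {b c t : ℝ} (ht : 0 < t) (htc : t < c) (hcb : c < b) :
    b / c < (b - t) / (c - t) := by
  rw [div_lt_div_iff₀ (by linarith) (by linarith)]
  nlinarith

namespace LinearMap

variable {V : Type*} [AddCommGroup V] [Module ℝ V] {B C : V →ₗ[ℝ] ℝ} {e u : V} {c : ℝ}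

theorem div_lt_div_sub_smul (he : B e = C e) (hCe : 0 < C e) (hu : C u < B u) (hc : 0 < c)
    (hcu : c * C e < C u) : B u / C u < B (u - c • e) / C (u - c • e) := by
  simp only [map_sub, map_smul, smul_eq_mul, he]
  exact div_lt_sub_div_sub (mul_pos hc hCe) hcu hu

end LinearMap

/-- A non-constant optimizer of the boundary crowding has a zero in the (compact)
mesh cell `K`.  `C` is the cell integral and `B` the boundary integral, linear
functionals with `C 1 > 0` and `B̂(1) = 1`; `S` is an admissible class of
functions closed under subtraction of constants; `Ustar` is a continuous
nonnegative maximizer of the boundary crowding `B̂(U) = B U / C U` over `S`.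
If `B̂(Ustar) > 1` then `Ustar` vanishes somewhere in `K`
(equivalently, its minimum over `K` is `0`). -/
theorem optimizer_has_zero
    {D : ℕ} (K : Set (EuclideanSpace ℝ (Fin D))) (hK : IsCompact K)
    (C B : (EuclideanSpace ℝ (Fin D) → ℝ) →ₗ[ℝ] ℝ)
    (hC1 : 0 < C (fun _ => 1))
    (hB1 : B (fun _ => 1) / C (fun _ => 1) = 1)
    (S : Set (EuclideanSpace ℝ (Fin D) → ℝ))
    (hSsub : ∀ U ∈ S, ∀ c : ℝ, (fun x => U x - c) ∈ S)
    (Ustar : EuclideanSpace ℝ (Fin D) → ℝ) (hUstarS : Ustar ∈ S)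
    (hUcont : ContinuousOn Ustar K)
    (hUpos : ∀ x ∈ K, 0 ≤ Ustar x)
    (hCU : 0 < C Ustar)
    (hmax : ∀ U ∈ S, ContinuousOn U K → (∀ x ∈ K, 0 ≤ U x) → 0 < C U →
      B U / C U ≤ B Ustar / C Ustar)
    (hgt : 1 < B Ustar / C Ustar) :
    ∃ x ∈ K, Ustar x = 0 := by
  by_contra! hzero
  have hB1C1 : B (fun _ => 1) = C (fun _ => 1) := (div_eq_one_iff_eq hC1.ne').1 hB1
  obtain ⟨m, hm, hmU⟩ :=
    hK.exists_forall_le' hUcont fun x hx => (hUpos x hx).lt_of_ne' (hzero x hx)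
  obtain ⟨c, hc, hcm⟩ := exists_between (lt_min hm (div_pos hCU hC1))
  have hcC : c * C (fun _ => 1) < C Ustar := (lt_div_iff₀ hC1).1 (hcm.trans_le (min_le_right _ _))
  have hshift : (fun x => Ustar x - c) = Ustar - c • fun _ => 1 := by
    ext x
    simp
  have hincrease := LinearMap.div_lt_div_sub_smul hB1C1 hC1 ((one_lt_div hCU).1 hgt) hc hcC
  rw [← hshift] at hincrease
  refine (hmax _ (hSsub Ustar hUstarS c) (hUcont.sub continuousOn_const) (fun x hx => ?_) ?_).not_gt
    hincrease
  · exact sub_nonneg.2 ((hcm.trans_le (min_le_left _ _)).le.trans (hmU x hx))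
  · rw [hshift, map_sub, map_smul, smul_eq_mul]
    exact sub_pos.2 hcC
end

section
/- Let n ≥ 0 and let x_1 < … < x_n be the interior Gauss–Lobatto points in (0,1). Define U⋆(x) = ∏_{i=1}^n (x − x_i)^2, a nonnegative polynomial of degree 2n. Then the boundary crowding B̂(U⋆) := (U⋆(0)+U⋆(1))/2 divided by ∫_0^1 U⋆ equals (n+1)(n+2)/2, and this is the maximum of B̂ over all nonzero nonnegative polynomials of degree at most 2n+1 on [0,1]. That is, for every polynomial U of degree at most 2n+1 with U ≥ 0 on [0,1] and ∫_0^1 U > 0, (U(0)+U(1))/2 ≤ ((n+1)(n+2)/2)·∫_0^1 U, and equality holds for U = U⋆. -/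
open intervalIntegral Polynomial Finset

/-!
Apply the Lobatto rule to `U`: the interior nodes carry positive weights, so for `U ≥ 0` the
interior sum is nonnegative and dropping it bounds the endpoint term by `2 ∫₀¹ U`. The bound is
attained exactly when the interior sum vanishes, e.g. by `U⋆`, which has a double root at every
interior node and degree `2n ≤ 2n+1`.
-/

section Quadrature

variable {m I a b S : ℝ}

theorem boundary_average_add_eq_of_quadrature (hm : m ≠ 0) (h : 2 * I = 2 / m * (a + b) + S) :
    (a + b) / 2 + m * S / 4 = m / 2 * I := by
  have hI : I = (a + b) / m + S / 2 := by
    field_simp at h ⊢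
    linarith
  rw [hI]
  field_simp
  ring

theorem boundary_average_eq_of_quadrature (hm : m ≠ 0) (h : 2 * I = 2 / m * (a + b) + 0) :
    (a + b) / 2 = m / 2 * I := by
  simpa using boundary_average_add_eq_of_quadrature hm h

theorem boundary_average_le_of_quadrature (hm : 0 < m) (hS : 0 ≤ S)
    (h : 2 * I = 2 / m * (a + b) + S) : (a + b) / 2 ≤ m / 2 * I := by
  rw [← boundary_average_add_eq_of_quadrature hm.ne' h]
  have : 0 ≤ m * S := mul_nonneg hm.le hS
  linarith

end Quadrature

section NodePolynomial

variable {ι : Type*} (s : Finset ι) (x : ι → ℝ)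

theorem natDegree_prod_sq_X_sub_C_le :
    (∏ i ∈ s, (X - C (x i)) ^ 2).natDegree ≤ 2 * #s := by
  refine (natDegree_prod_le _ _).trans ?_
  simp [natDegree_pow, mul_comm]

theorem eval_prod_sq_X_sub_C_of_mem {j : ι} (hj : j ∈ s) :
    (∏ i ∈ s, (X - C (x i)) ^ 2).eval (x j) = 0 := by
  rw [eval_prod]
  exact prod_eq_zero hj (by simp)

end NodePolynomial

theorem gauss_lobatto_optimizer_general (n : ℕ)
    (x : Fin n → ℝ) (hx : ∀ i, x i ∈ Set.Ioo (0 : ℝ) 1)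
    (w : Fin n → ℝ) (hw : ∀ i, 0 < w i)
    (hquad : ∀ U : Polynomial ℝ, U.natDegree ≤ 2 * n + 1 →
      2 * ∫ t in (0:ℝ)..1, U.eval t =
        (2 / (((n : ℝ) + 1) * ((n : ℝ) + 2))) * (U.eval 0 + U.eval 1) +
          ∑ i, w i * U.eval (x i)) :
    (((∏ i, (Polynomial.X - Polynomial.C (x i)) ^ 2 : Polynomial ℝ).eval 0 +
        (∏ i, (Polynomial.X - Polynomial.C (x i)) ^ 2 : Polynomial ℝ).eval 1) / 2 =
      (((n : ℝ) + 1) * ((n : ℝ) + 2) / 2) *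
        ∫ t in (0:ℝ)..1,
          (∏ i, (Polynomial.X - Polynomial.C (x i)) ^ 2 : Polynomial ℝ).eval t) ∧
    ∀ U : Polynomial ℝ, U.natDegree ≤ 2 * n + 1 →
      (∀ t ∈ Set.Icc (0 : ℝ) 1, 0 ≤ U.eval t) →
      0 < ∫ t in (0:ℝ)..1, U.eval t →
      (U.eval 0 + U.eval 1) / 2 ≤
        (((n : ℝ) + 1) * ((n : ℝ) + 2) / 2) * ∫ t in (0:ℝ)..1, U.eval t := by
  have hm : (0 : ℝ) < ((n : ℝ) + 1) * ((n : ℝ) + 2) := by positivity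
  constructor
  · have hdeg : (∏ i, (X - C (x i)) ^ 2).natDegree ≤ 2 * n + 1 := by
      simpa using (natDegree_prod_sq_X_sub_C_le univ x).trans (Nat.le_succ _)
    have hq := hquad _ hdeg
    simp only [eval_prod_sq_X_sub_C_of_mem univ x (mem_univ _), mul_zero, sum_const_zero] at hq
    exact boundary_average_eq_of_quadrature hm.ne' hq
  · intro U hU hU_nonneg _
    have hinterior : 0 ≤ ∑ i, w i * U.eval (x i) := sum_nonneg fun i _ =>
      mul_nonneg (hw i).le (hU_nonneg _ (Set.Ioo_subset_Icc_self (hx i)))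
    exact boundary_average_le_of_quadrature hm hinterior (hquad U hU)

/-- Let `x 0 < … < x (n-1)` be the interior Gauss–Lobatto points in `(0,1)`
(characterized by the Gauss–Lobatto quadrature identity with endpoint weight
`2/((n+1)(n+2))` exact on degree `≤ 2n+1`).  Then `U⋆ = ∏ (X − x i)²` satisfies
`B̂(U⋆) = (n+1)(n+2)/2`, and this is the maximum boundary crowding over all
nonnegative polynomials of degree at most `2n+1` with positive cell integral:
`(U(0)+U(1))/2 ≤ ((n+1)(n+2)/2)·∫₀¹ U`. -/
theorem gauss_lobatto_optimizer (n : ℕ)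
    (x : Fin n → ℝ) (hx : ∀ i, x i ∈ Set.Ioo (0 : ℝ) 1)
    (hmono : StrictMono x)
    (w : Fin n → ℝ) (hw : ∀ i, 0 < w i)
    (hquad : ∀ U : Polynomial ℝ, U.natDegree ≤ 2 * n + 1 →
      2 * ∫ t in (0:ℝ)..1, U.eval t =
        (2 / (((n : ℝ) + 1) * ((n : ℝ) + 2))) * (U.eval 0 + U.eval 1) +
          ∑ i, w i * U.eval (x i)) :
    (((∏ i, (Polynomial.X - Polynomial.C (x i)) ^ 2 : Polynomial ℝ).eval 0 +
        (∏ i, (Polynomial.X - Polynomial.C (x i)) ^ 2 : Polynomial ℝ).eval 1) / 2 =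
      (((n : ℝ) + 1) * ((n : ℝ) + 2) / 2) *
        ∫ t in (0:ℝ)..1,
          (∏ i, (Polynomial.X - Polynomial.C (x i)) ^ 2 : Polynomial ℝ).eval t) ∧
    ∀ U : Polynomial ℝ, U.natDegree ≤ 2 * n + 1 →
      (∀ t ∈ Set.Icc (0 : ℝ) 1, 0 ≤ U.eval t) →
      0 < ∫ t in (0:ℝ)..1, U.eval t →
      (U.eval 0 + U.eval 1) / 2 ≤
        (((n : ℝ) + 1) * ((n : ℝ) + 2) / 2) * ∫ t in (0:ℝ)..1, U.eval t :=
  gauss_lobatto_optimizer_general n x hx w hw hquad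
end

section
/- Special case n = 1: For every quadratic polynomial U on [0,1] with U ≥ 0 on [0,1] and ∫_0^1 U > 0, we have (U(0)+U(1))/2 ≤ 3·∫_0^1 U, with equality if and only if U is a positive multiple of (x − 1/2)^2. -/
/-!
Simpson's rule is exact for polynomials of degree at most three, so for a quadratic `U`
`3 ∫₀¹ U = (U(0) + U(1))/2 + 2 U(1/2)`, and `U(1/2) ≥ 0` gives the inequality.
Equality forces `U(1/2) = 0`; since `U ≥ 0` around `1/2`, this is an interior minimum,
hence a double root, so `U = c (X - 1/2)²`, and `c > 0` because `U ≠ 0` and `U(0) = c/4 ≥ 0`.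
-/

open intervalIntegral Polynomial

theorem Polynomial.integral_eval_eq_simpson {p : ℝ[X]} (hp : p.natDegree ≤ 3) (a b : ℝ) :
    ∫ x in a..b, p.eval x =
      (b - a) / 6 * (p.eval a + 4 * p.eval ((a + b) / 2) + p.eval b) := by
  simp only [eval_eq_sum_range' (Nat.lt_succ_of_le hp)]
  rw [integral_finsetSum fun i _ => ((continuous_pow i).const_mul _).intervalIntegrable _ _]
  simp only [integral_const_mul, integral_pow, Finset.sum_range_succ, Finset.sum_range_zero]
  push_cast
  ring

theorem Polynomial.X_sub_C_sq_dvd_of_isLocalMin {p : ℝ[X]} {x₀ : ℝ}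
    (hmin : IsLocalMin (fun x => p.eval x) x₀) (hroot : p.IsRoot x₀) :
    (X - C x₀) ^ 2 ∣ p := by
  rcases eq_or_ne p 0 with rfl | hp
  · exact dvd_zero _
  have hder : p.derivative.IsRoot x₀ := by
    rw [IsRoot, ← Polynomial.deriv]
    exact hmin.deriv_eq_zero
  exact (le_rootMultiplicity_iff hp).1 ((one_lt_rootMultiplicity_iff_isRoot hp).2 ⟨hroot, hder⟩)

theorem Polynomial.exists_eq_C_mul_X_sub_C_sq_of_dvd {R : Type*} [CommRing R] [Nontrivial R]
    {p : R[X]} {a : R} (hp : p.natDegree ≤ 2) (hdvd : (X - C a) ^ 2 ∣ p) :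
    ∃ c, p = C c * (X - C a) ^ 2 := by
  obtain ⟨q, rfl⟩ := hdvd
  rcases eq_or_ne q 0 with rfl | hq
  · exact ⟨0, by simp⟩
  rw [((monic_X_sub_C a).pow 2).natDegree_mul' hq, (monic_X_sub_C a).natDegree_pow,
    natDegree_X_sub_C] at hp
  exact ⟨q.coeff 0, by rw [mul_comm, ← eq_C_of_natDegree_le_zero (by omega)]⟩

/-- For every quadratic polynomial `U ≥ 0` on `[0,1]` with `∫₀¹ U > 0`, the
boundary average is at most `3` times the cell average:
`(U(0)+U(1))/2 ≤ 3·∫₀¹ U`, with equality iff `U` is a positive multiple of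
`(X − 1/2)²`. -/
theorem quadratic_crowding_unit_interval
    (U : Polynomial ℝ) (hdeg : U.natDegree ≤ 2)
    (hpos : ∀ t ∈ Set.Icc (0 : ℝ) 1, 0 ≤ U.eval t)
    (hC : 0 < ∫ t in (0:ℝ)..1, U.eval t) :
    (U.eval 0 + U.eval 1) / 2 ≤ 3 * ∫ t in (0:ℝ)..1, U.eval t ∧
    ((U.eval 0 + U.eval 1) / 2 = 3 * ∫ t in (0:ℝ)..1, U.eval t ↔
      ∃ c : ℝ, 0 < c ∧
        U = Polynomial.C c * (Polynomial.X - Polynomial.C (1/2)) ^ 2) := by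
  have hsimpson :
      3 * ∫ t in (0:ℝ)..1, U.eval t = (U.eval 0 + U.eval 1) / 2 + 2 * U.eval (1 / 2) := by
    rw [U.integral_eval_eq_simpson (by omega)]
    norm_num
    ring
  have hmid : 0 ≤ U.eval (1 / 2) := hpos _ ⟨by norm_num, by norm_num⟩
  refine ⟨by linarith, fun heq => ?_, ?_⟩
  · have hroot : U.IsRoot (1 / 2) := by rw [IsRoot.def]; linarith
    have hmin : IsLocalMin (fun x => U.eval x) (1 / 2) := by
      filter_upwards [Icc_mem_nhds (by norm_num : (0:ℝ) < 1 / 2) (by norm_num : (1 / 2 : ℝ) < 1)]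
        with x hx
      rw [hroot.eq_zero]
      exact hpos x hx
    obtain ⟨c, rfl⟩ :=
      exists_eq_C_mul_X_sub_C_sq_of_dvd hdeg (X_sub_C_sq_dvd_of_isLocalMin hmin hroot)
    have hc_ne : c ≠ 0 := by
      rintro rfl
      simp at hC
    have hc_nonneg : 0 ≤ c := by simpa using hpos 0 ⟨le_rfl, zero_le_one⟩
    exact ⟨c, hc_nonneg.lt_of_ne' hc_ne, rfl⟩
  · rintro ⟨c, -, rfl⟩
    rw [hsimpson]
    simp
end

section
/- For every cubic polynomial U on [0,1] with U ≥ 0 on [0,1] and ∫_0^1 U > 0, we have (U(0)+U(1))/2 ≤ 3·∫_0^1 U. That is, the optimal boundary crowding cap for cubic polynomials on the unit interval equals that for quadratics, namely 3. -/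
/-! Simpson's rule is exact for cubics, so `3 ∫₀¹ U = (U(0) + U(1))/2 + 2 U(1/2)`, and the last
term is nonnegative. -/

open intervalIntegral

theorem Polynomial.integral_eval_eq_sum_range {U : Polynomial ℝ} {n : ℕ} (hn : U.natDegree < n)
    (a b : ℝ) :
    ∫ t in a..b, U.eval t =
      ∑ i ∈ Finset.range n, U.coeff i * ((b ^ (i + 1) - a ^ (i + 1)) / (i + 1)) := by
  simp_rw [U.eval_eq_sum_range' hn]
  rw [integral_finsetSum fun i _ => ((continuous_pow i).const_mul (U.coeff i)).intervalIntegrable a b]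
  simp only [integral_const_mul, integral_pow]

theorem Polynomial.integral_eval_eq_simpson_of_natDegree_le_three {U : Polynomial ℝ}
    (hU : U.natDegree ≤ 3) (a b : ℝ) :
    ∫ t in a..b, U.eval t = (b - a) / 6 * (U.eval a + 4 * U.eval ((a + b) / 2) + U.eval b) := by
  have h4 : U.natDegree < 4 := Nat.lt_succ_of_le hU
  rw [U.integral_eval_eq_sum_range h4]
  simp only [U.eval_eq_sum_range' h4, Finset.sum_range_succ, Finset.sum_range_zero]
  push_cast
  ring

theorem cubic_crowding_unit_interval_general
    (U : Polynomial ℝ) (hdeg : U.natDegree ≤ 3)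
    (hpos : ∀ t ∈ Set.Icc (0 : ℝ) 1, 0 ≤ U.eval t) :
    (U.eval 0 + U.eval 1) / 2 ≤ 3 * ∫ t in (0:ℝ)..1, U.eval t := by
  have hmid : 0 ≤ U.eval (1 / 2) := hpos _ ⟨by norm_num, by norm_num⟩
  rw [U.integral_eval_eq_simpson_of_natDegree_le_three hdeg]
  norm_num
  linarith

/-- For every cubic polynomial `U ≥ 0` on `[0,1]` with `∫₀¹ U > 0`, the boundary
average is at most `3` times the cell average: `(U(0)+U(1))/2 ≤ 3·∫₀¹ U`; i.e.
the optimal boundary crowding cap for cubics equals that for quadratics. -/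
theorem cubic_crowding_unit_interval
    (U : Polynomial ℝ) (hdeg : U.natDegree ≤ 3)
    (hpos : ∀ t ∈ Set.Icc (0 : ℝ) 1, 0 ≤ U.eval t)
    (hC : 0 < ∫ t in (0:ℝ)..1, U.eval t) :
    (U.eval 0 + U.eval 1) / 2 ≤ 3 * ∫ t in (0:ℝ)..1, U.eval t :=
  cubic_crowding_unit_interval_general U hdeg hpos
end

section
/- Special case D = 1: for every quadratic polynomial U on [−1,1] with U ≥ 0 on [−1,1] and ∫_{−1}^1 U > 0, (U(−1)+U(1))/2 ≤ 3·(1/2)∫_{−1}^1 U, i.e. the boundary average is at most 3 times the cell average, with equality iff U is a positive multiple of x^2. -/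
open intervalIntegral

/-!
Simpson's rule is exact on polynomials of degree at most three, so for a quadratic `U` the
integral `∫₋₁¹ U` equals `(U(-1) + 4 U(0) + U(1)) / 3`. Hence three times the cell average
exceeds the boundary average by exactly `2 U(0) ≥ 0`. Equality forces `U(0) = 0`; since `U ≥ 0`
near `0`, the point `0` is then a local minimum, so `U'(0) = 0` and `U = a X²`, with `a > 0`
because the integral is positive.
-/

namespace Polynomial

theorem integral_eval_neg_one_one_eq_simpson {p : ℝ[X]} (hp : p.natDegree ≤ 3) :
    ∫ t in (-1 : ℝ)..1, p.eval t = (p.eval (-1) + 4 * p.eval 0 + p.eval 1) / 3 := by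
  have hsum (t : ℝ) : p.eval t = ∑ i ∈ Finset.range 4, p.coeff i * t ^ i :=
    eval_eq_sum_range' (by omega) t
  simp_rw [hsum]
  rw [integral_finsetSum fun i _ => (by fun_prop : Continuous _).intervalIntegrable _ _]
  simp only [Finset.sum_range_succ, Finset.sum_range_zero, integral_const_mul, integral_pow]
  ring

theorem coeff_one_eq_zero_of_isLocalMin_zero {p : ℝ[X]} (h : IsLocalMin (fun t => p.eval t) 0) :
    p.coeff 1 = 0 := by
  have hderiv := h.deriv_eq_zero
  rw [Polynomial.deriv, ← coeff_zero_eq_eval_zero, coeff_derivative] at hderiv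
  simpa using hderiv

theorem eq_C_mul_X_sq_of_natDegree_le_two {R : Type*} [Semiring R] {p : R[X]}
    (hp : p.natDegree ≤ 2) (h0 : p.coeff 0 = 0) (h1 : p.coeff 1 = 0) :
    p = C (p.coeff 2) * X ^ 2 := by
  ext n
  rcases n with _ | _ | _ | n
  · simpa using h0
  · simpa using h1
  · simp
  · simp [coeff_eq_zero_of_natDegree_lt (show p.natDegree < n + 3 by omega)]

end Polynomial

open Polynomial in
/-- Case `D = 1` of the quadratic optimal weight: for every quadratic polynomial
`U ≥ 0` on `[−1,1]` with `∫₋₁¹ U > 0`, the boundary average `(U(−1)+U(1))/2` is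
at most `3` times the cell average `(1/2)∫₋₁¹ U`, with equality iff `U` is a
positive multiple of `x²`. -/
theorem quadratic_crowding_symmetric_interval
    (U : Polynomial ℝ) (hdeg : U.natDegree ≤ 2)
    (hpos : ∀ t ∈ Set.Icc (-1 : ℝ) 1, 0 ≤ U.eval t)
    (hC : 0 < ∫ t in (-1:ℝ)..1, U.eval t) :
    (U.eval (-1) + U.eval 1) / 2 ≤ 3 * ((1/2) * ∫ t in (-1:ℝ)..1, U.eval t) ∧
    ((U.eval (-1) + U.eval 1) / 2 = 3 * ((1/2) * ∫ t in (-1:ℝ)..1, U.eval t) ↔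
      ∃ c : ℝ, 0 < c ∧ U = Polynomial.C c * Polynomial.X ^ 2) := by
  have hsimpson := integral_eval_neg_one_one_eq_simpson (hdeg.trans (by norm_num))
  have hU0_nonneg : 0 ≤ U.eval 0 := hpos 0 (by norm_num)
  rw [hsimpson] at hC ⊢
  refine ⟨by linarith, fun heq => ?_, ?_⟩
  · have hU0 : U.eval 0 = 0 := by linarith
    have hmin : IsLocalMin (fun t => U.eval t) 0 :=
      Filter.mem_of_superset (Icc_mem_nhds (by norm_num : (-1 : ℝ) < 0) one_pos) fun t ht => by
        simpa [hU0] using hpos t ht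
    have hU := eq_C_mul_X_sq_of_natDegree_le_two hdeg (by rwa [coeff_zero_eq_eval_zero])
      (coeff_one_eq_zero_of_isLocalMin_zero hmin)
    refine ⟨U.coeff 2, ?_, hU⟩
    rw [hU] at hC
    simpa using hC
  · rintro ⟨c, -, rfl⟩
    simp only [eval_mul, eval_C, eval_pow, eval_X]
    ring
end

section
/- Let K be an even mesh cell with center at the origin (K = −K), invariant under the map x ↦ −x, and suppose that map is an isometry of K preserving both the cell measure and boundary measure. Then the supremum of the boundary crowding B̄(U)/C̄(U) over nonzero nonnegative polynomials of degree at most 2n+1 equals the supremum over nonzero nonnegative polynomials of degree at most 2n. That is, M̄⋆(P^{2n+1}) = M̄⋆(P^{2n}) for even cells. -/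
open MeasureTheory MvPolynomial

/-! The map `x ↦ -x` preserves `K`, its frontier, Lebesgue measure and every Hausdorff measure.
Hence replacing a polynomial `U ≥ 0` on `K` by `U(x) + U(-x)` doubles both the cell and the
boundary average, so the crowding ratio is unchanged; and the monomials of odd degree cancel in
this sum, so its degree drops from `2n + 1` to `2n`. -/

namespace MvPolynomial

variable {σ R : Type*} [CommRing R]

noncomputable def negVars : MvPolynomial σ R →ₐ[R] MvPolynomial σ R :=
  bind₁ fun i => -X i

theorem eval_negVars (x : σ → R) (P : MvPolynomial σ R) :
    eval x (negVars P) = eval (-x) P := by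
  rw [negVars, ← aeval_eq_eval, aeval_bind₁]
  simp [Pi.neg_def]

theorem negVars_monomial (d : σ →₀ ℕ) (r : R) :
    negVars (monomial d r) = monomial d ((-1) ^ d.degree * r) := by
  rw [negVars, bind₁_monomial, monomial_eq, Finsupp.prod, Finsupp.degree_apply,
    ← Finset.prod_pow_eq_pow_sum, C_mul, map_prod,
    Finset.prod_congr rfl fun i _ => neg_pow (X i : MvPolynomial σ R) (d i),
    Finset.prod_mul_distrib]
  simp only [map_pow, map_neg, map_one]
  ring

theorem coeff_negVars (P : MvPolynomial σ R) (d : σ →₀ ℕ) :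
    coeff d (negVars P) = (-1) ^ d.degree * coeff d P := by
  classical
  induction P using induction_on' with
  | monomial e r =>
    rw [negVars_monomial, coeff_monomial, coeff_monomial]
    split_ifs with h
    · rw [h]
    · rw [mul_zero]
  | add p q hp hq => rw [map_add, coeff_add, coeff_add, hp, hq, mul_add]

theorem totalDegree_add_negVars_le {P : MvPolynomial σ R} {n : ℕ}
    (hP : P.totalDegree ≤ 2 * n + 1) : (P + negVars P).totalDegree ≤ 2 * n := by
  refine Finset.sup_le fun d hd => ?_
  rw [mem_support_iff, coeff_add, coeff_negVars, ← one_add_mul] at hd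
  have hdP : d ∈ P.support := mem_support_iff.2 (right_ne_zero_of_mul hd)
  have heven : Even d.degree := by
    by_contra hodd
    rw [Nat.not_even_iff_odd.1 hodd |>.neg_one_pow, add_neg_cancel, zero_mul] at hd
    exact hd rfl
  have hle : d.degree ≤ 2 * n + 1 := (le_totalDegree hdP).trans hP
  change d.degree ≤ 2 * n
  obtain ⟨k, hk⟩ := heven
  omega

end MvPolynomial

namespace MeasureTheory

variable {G : Type*} [MeasurableSpace G] [AddGroup G] [MeasurableNeg G]
  {μ : Measure G} [μ.IsNegInvariant] {A : Set G}

theorem Measure.isNegInvariant_restrict (hA : -A = A) :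
    (μ.restrict A).IsNegInvariant := by
  have h : (map Neg.neg μ).restrict A = map Neg.neg (μ.restrict (-A)) :=
    (MeasurableEquiv.neg G).measurableEmbedding.restrict_map μ A
  rw [Measure.map_neg_eq_self, hA] at h
  exact ⟨h.symm⟩

theorem setIntegral_add_comp_neg_of_nonneg (hA : -A = A) {f : G → ℝ} (hf : Measurable f)
    (hf₀ : ∀ x ∈ A, 0 ≤ f x) :
    ∫ x in A, f x + f (-x) ∂μ = 2 * ∫ x in A, f x ∂μ := by
  have := Measure.isNegInvariant_restrict (μ := μ) hA
  by_cases hi : Integrable f (μ.restrict A)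
  · rw [integral_add hi hi.comp_neg, integral_neg_eq_self, two_mul]
  · -- for `f ≥ 0`, `f + f ∘ neg` is integrable only if `f` is, so both sides are junk zeros
    have hsum : ¬Integrable (fun x => f x + f (-x)) (μ.restrict A) := by
      refine fun hsum => hi (hsum.mono' hf.aestronglyMeasurable ?_)
      rw [ae_restrict_iff (measurableSet_le (by fun_prop) (by fun_prop))]
      refine Filter.Eventually.of_forall fun x hx => ?_
      have hx' : -x ∈ A := hA ▸ Set.neg_mem_neg.2 hx
      rw [Real.norm_of_nonneg (hf₀ x hx)]
      linarith [hf₀ (-x) hx']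
    rw [integral_undef hi, integral_undef hsum, mul_zero]

theorem setAverage_add_comp_neg_of_nonneg (hA : -A = A) {f : G → ℝ} (hf : Measurable f)
    (hf₀ : ∀ x ∈ A, 0 ≤ f x) :
    ⨍ x in A, f x + f (-x) ∂μ = 2 * ⨍ x in A, f x ∂μ := by
  rw [setAverage_eq, setAverage_eq, setIntegral_add_comp_neg_of_nonneg hA hf hf₀, smul_eq_mul,
    smul_eq_mul, mul_left_comm]

instance Measure.hausdorffMeasure.isNegInvariant {E : Type*}
    [NormedAddCommGroup E] [MeasurableSpace E] [BorelSpace E] (d : ℝ) :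
    (μH[d] : Measure E).IsNegInvariant :=
  ⟨(IsometryEquiv.neg E).map_hausdorffMeasure d⟩

end MeasureTheory

theorem neg_frontier {E : Type*} [TopologicalSpace E] [InvolutiveNeg E] [ContinuousNeg E]
    (s : Set E) : -frontier s = frontier (-s) :=
  (Homeomorph.neg E).preimage_frontier s

theorem even_cell_odd_degree_same_weight_general
    (D n : ℕ) (K : Set (EuclideanSpace ℝ (Fin D)))
    (heven : K = -K) :
    sSup {m : ℝ | ∃ P : MvPolynomial (Fin D) ℝ,
        P.totalDegree ≤ 2 * n + 1 ∧
        (∀ x ∈ K, 0 ≤ MvPolynomial.eval (fun i => x i) P) ∧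
        0 < (∫ x in K, MvPolynomial.eval (fun i => x i) P) ∧
        m = (⨍ x in frontier K,
              MvPolynomial.eval (fun i => x i) P ∂(μH[(D : ℝ) - 1])) /
            (⨍ x in K, MvPolynomial.eval (fun i => x i) P)} =
    sSup {m : ℝ | ∃ P : MvPolynomial (Fin D) ℝ,
        P.totalDegree ≤ 2 * n ∧
        (∀ x ∈ K, 0 ≤ MvPolynomial.eval (fun i => x i) P) ∧
        0 < (∫ x in K, MvPolynomial.eval (fun i => x i) P) ∧
        m = (⨍ x in frontier K,
              MvPolynomial.eval (fun i => x i) P ∂(μH[(D : ℝ) - 1])) /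
            (⨍ x in K, MvPolynomial.eval (fun i => x i) P)} := by
  congr 1
  ext m
  refine ⟨fun ⟨P, hdeg, hK₀, hpos, hm⟩ => ?_,
    fun ⟨P, hdeg, hK₀, hpos, hm⟩ => ⟨P, hdeg.trans (Nat.le_succ _), hK₀, hpos, hm⟩⟩
  set f : EuclideanSpace ℝ (Fin D) → ℝ := fun x => eval (fun i => x i) P
  have hf : Continuous f := (continuous_eval P).comp (PiLp.continuous_ofLp 2 _)
  have hsymm : ∀ x, eval (fun i => x i) (P + negVars P) = f x + f (-x) := fun x => by
    rw [map_add, eval_negVars]; rfl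
  have hF₀ : ∀ x ∈ frontier K, 0 ≤ f x :=
    (isClosed_le continuous_const hf).closure_subset_iff.2 hK₀ |>.trans' frontier_subset_closure
  have hFsymm : -frontier K = frontier K := by rw [neg_frontier, ← heven]
  refine ⟨P + negVars P, totalDegree_add_negVars_le hdeg, fun x hx => ?_, ?_, ?_⟩ <;>
    simp only [hsymm]
  · exact add_nonneg (hK₀ x hx) (hK₀ (-x) (heven ▸ Set.neg_mem_neg.2 hx))
  · rw [setIntegral_add_comp_neg_of_nonneg heven.symm hf.measurable hK₀]
    exact mul_pos two_pos hpos
  · rw [hm, setAverage_add_comp_neg_of_nonneg heven.symm hf.measurable hK₀,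
      setAverage_add_comp_neg_of_nonneg hFsymm hf.measurable hF₀, mul_div_mul_left _ _ two_ne_zero]

/-- For an even mesh cell (`K = −K`, so that `x ↦ −x` is an isometry of `K`
preserving cell and boundary measures), the supremum of the boundary crowding
`B̄(U)/C̄(U)` over nonzero nonnegative polynomials of total degree at most
`2n+1` equals the supremum over those of degree at most `2n`:
`M̄⋆(P^{2n+1}) = M̄⋆(P^{2n})`. -/
theorem even_cell_odd_degree_same_weight
    (D n : ℕ) (K : Set (EuclideanSpace ℝ (Fin D))) (hK : IsCompact K)
    (heven : K = -K) :
    sSup {m : ℝ | ∃ P : MvPolynomial (Fin D) ℝ,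
        P.totalDegree ≤ 2 * n + 1 ∧
        (∀ x ∈ K, 0 ≤ MvPolynomial.eval (fun i => x i) P) ∧
        0 < (∫ x in K, MvPolynomial.eval (fun i => x i) P) ∧
        m = (⨍ x in frontier K,
              MvPolynomial.eval (fun i => x i) P ∂(μH[(D : ℝ) - 1])) /
            (⨍ x in K, MvPolynomial.eval (fun i => x i) P)} =
    sSup {m : ℝ | ∃ P : MvPolynomial (Fin D) ℝ,
        P.totalDegree ≤ 2 * n ∧
        (∀ x ∈ K, 0 ≤ MvPolynomial.eval (fun i => x i) P) ∧
        0 < (∫ x in K, MvPolynomial.eval (fun i => x i) P) ∧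
        m = (⨍ x in frontier K,
              MvPolynomial.eval (fun i => x i) P ∂(μH[(D : ℝ) - 1])) /
            (⨍ x in K, MvPolynomial.eval (fun i => x i) P)} :=
  even_cell_odd_degree_same_weight_general D n K heven
end
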